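/- arXiv:math/0409080 — 3 statements merged into one kernel-verified Lean document; each statement's English description precedes it below -/
import Mathlib

section
/- Let M and N be matroids with finite disjoint ground sets S and T, and let L be the free product M □ N. Then for every subset U ⊆ S ∪ T with |U| = |S|, the rank of U in L satisfies rk_L(U) ≥ rk(M). -/
/-!
Take a basis `I` of `U ∩ S` in `M`. Since `|U| = |S|`, the set `S \ U` has as many elements as
`U ∩ T`, and adding it to `U ∩ S` gives `S`; so `rk(M) - |I| ≤ |U ∩ T|`. Adding to `I` any
`rk(M) - |I|` elements of `U ∩ T` gives a set of size `rk(M)` inside `U` which is independent in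
the free product, since the nullity of its `T`-part is at most the size of that part.
-/

open Set Matroid

/-- The rank of a set `X` in a matroid `M`: the maximum cardinality of an
independent subset of `X`.  For `X = M.E` this is the rank of `M`. -/
noncomputable def mrk {α : Type*} (M : Matroid α) (X : Set α) : ℕ :=
  sSup (Set.ncard '' {I | M.Indep I ∧ I ⊆ X})

namespace Matroid

variable {α : Type*} {M : Matroid α} {I J X Y : Set α}

lemma IsBasis'.mrk_eq_ncard [M.RankFinite] (hI : M.IsBasis' I X) : mrk M X = I.ncard := by
  refine IsGreatest.csSup_eq ⟨⟨I, ⟨hI.indep, hI.subset⟩, rfl⟩, ?_⟩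
  rintro _ ⟨K, ⟨hK, hKX⟩, rfl⟩
  rw [← Nat.cast_le (α := ℕ∞), hK.finite.cast_ncard_eq, hI.indep.finite.cast_ncard_eq,
    hI.encard_eq_eRk]
  exact hK.encard_le_eRk_of_subset hKX

lemma cast_mrk (M : Matroid α) [M.RankFinite] (X : Set α) : (mrk M X : ℕ∞) = M.eRk X := by
  obtain ⟨I, hI⟩ := M.exists_isBasis' X
  rw [hI.mrk_eq_ncard, hI.indep.finite.cast_ncard_eq, hI.encard_eq_eRk]

lemma Indep.mrk_eq_ncard [M.RankFinite] (hI : M.Indep I) : mrk M I = I.ncard :=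
  hI.isBasis_self.isBasis'.mrk_eq_ncard

lemma Indep.ncard_le_mrk [M.RankFinite] (hI : M.Indep I) (hIX : I ⊆ X) : I.ncard ≤ mrk M X := by
  rw [← Nat.cast_le (α := ℕ∞), cast_mrk, hI.finite.cast_ncard_eq]
  exact hI.encard_le_eRk_of_subset hIX

lemma mrk_union_le_mrk_add_ncard [M.RankFinite] (X : Set α) (hY : Y.Finite) :
    mrk M (X ∪ Y) ≤ mrk M X + Y.ncard := by
  rw [← Nat.cast_le (α := ℕ∞), Nat.cast_add, cast_mrk, cast_mrk, hY.cast_ncard_eq]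
  exact M.eRk_union_le_eRk_add_encard X Y

end Matroid

lemma Set.ncard_sdiff_eq_ncard_inter_of_ncard_eq {α : Type*} {S T U : Set α} (hS : S.Finite)
    (hT : T.Finite) (hST : Disjoint S T) (hU : U ⊆ S ∪ T) (hUS : U.ncard = S.ncard) :
    (S \ U).ncard = (U ∩ T).ncard := by
  have hUdiff : U \ S = U ∩ T := by
    ext x
    refine ⟨fun ⟨hxU, hxS⟩ ↦ ⟨hxU, (hU hxU).resolve_left hxS⟩,
      fun ⟨hxU, hxT⟩ ↦ ⟨hxU, disjoint_right.1 hST hxT⟩⟩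
  rw [← hUdiff, ← ncard_eq_ncard_iff_ncard_sdiff_eq_ncard_sdiff hS ((hS.union hT).subset hU)]
  exact hUS.symm

section FreeProduct

variable {α : Type*} {M N L : Matroid α} {S T I J : Set α}

lemma indep_union_of_ncard_add_ncard_le [M.RankFinite] (hST : Disjoint S T)
    (hLI : ∀ A : Set α, L.Indep A ↔ A ⊆ S ∪ T ∧ M.Indep (A ∩ S) ∧
      (A ∩ T).ncard - mrk N (A ∩ T) ≤ mrk M S - mrk M (A ∩ S))
    (hI : M.Indep I) (hIS : I ⊆ S) (hJT : J ⊆ T) (hcard : I.ncard + J.ncard ≤ mrk M S) :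
    L.Indep (I ∪ J) := by
  have hS : (I ∪ J) ∩ S = I := by
    rw [union_inter_distrib_right, inter_eq_left.2 hIS, (hST.symm.mono_left hJT).inter_eq,
      union_empty]
  have hT : (I ∪ J) ∩ T = J := by
    rw [union_inter_distrib_right, inter_eq_left.2 hJT, (hST.mono_left hIS).inter_eq,
      empty_union]
  rw [hLI, hS, hT, hI.mrk_eq_ncard]
  exact ⟨union_subset_union hIS hJT, hI, by omega⟩

end FreeProduct

theorem stmt_6_general {α : Type*} (M N : Matroid α) (S T : Set α)
    (hS : S.Finite) (hT : T.Finite) (hMS : M.E = S)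
    (hST : Disjoint S T)
    (L : Matroid α) (hLE : L.E = S ∪ T)
    (hLI : ∀ A : Set α, L.Indep A ↔ A ⊆ S ∪ T ∧ M.Indep (A ∩ S) ∧
      (A ∩ T).ncard - mrk N (A ∩ T) ≤ mrk M S - mrk M (A ∩ S)) :
    ∀ U : Set α, U ⊆ S ∪ T → U.ncard = S.ncard → mrk M S ≤ mrk L U := by
  intro U hU hcard
  have : M.Finite := ⟨hMS ▸ hS⟩
  have : L.Finite := ⟨hLE ▸ hS.union hT⟩
  obtain ⟨I, hI⟩ := M.exists_isBasis' (U ∩ S)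
  have hIS : I ⊆ S := hI.subset.trans inter_subset_right
  have hIr : I.ncard ≤ mrk M S := hI.indep.ncard_le_mrk hIS
  have hdeficit : mrk M S ≤ I.ncard + (U ∩ T).ncard :=
    calc mrk M S = mrk M (U ∩ S ∪ S \ U) := by rw [inter_comm, inter_union_sdiff]
      _ ≤ mrk M (U ∩ S) + (S \ U).ncard := mrk_union_le_mrk_add_ncard _ hS.sdiff
      _ = I.ncard + (U ∩ T).ncard := by
        rw [hI.mrk_eq_ncard, ncard_sdiff_eq_ncard_inter_of_ncard_eq hS hT hST hU hcard]
  obtain ⟨J, hJ, hJcard⟩ := exists_subset_card_eq (s := U ∩ T) (n := mrk M S - I.ncard) (by omega)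
  have hJT : J ⊆ T := hJ.trans inter_subset_right
  have hIJ : L.Indep (I ∪ J) :=
    indep_union_of_ncard_add_ncard_le hST hLI hI.indep hIS hJT (by omega)
  calc mrk M S = (I ∪ J).ncard := by
        rw [ncard_union_eq (hST.mono hIS hJT) (hS.subset hIS) (hT.subset hJT), hJcard]
        omega
    _ ≤ mrk L U := hIJ.ncard_le_mrk <|
        union_subset (hI.subset.trans inter_subset_left) (hJ.trans inter_subset_left)

/-- **Lemma 4.** If `L = M □ N`, then `rk(M) ≤ rk_L(U)` for every `U ⊆ S ∪ T`
with `|U| = |S|`. -/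
theorem stmt_6 {α : Type*} (M N : Matroid α) (S T : Set α)
    (hS : S.Finite) (hT : T.Finite) (hMS : M.E = S) (hNT : N.E = T)
    (hST : Disjoint S T)
    (L : Matroid α) (hLE : L.E = S ∪ T)
    (hLI : ∀ A : Set α, L.Indep A ↔ A ⊆ S ∪ T ∧ M.Indep (A ∩ S) ∧
      (A ∩ T).ncard - mrk N (A ∩ T) ≤ mrk M S - mrk M (A ∩ S)) :
    ∀ U : Set α, U ⊆ S ∪ T → U.ncard = S.ncard → mrk M S ≤ mrk L U :=
  stmt_6_general M N S T hS hT hMS hST L hLE hLI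
end

section
/- Let M and N be matroids with finite disjoint ground sets S and T, let L be the free product M □ N, and let U ⊆ S ∪ T with |U| = |S|. Suppose every element of V ∩ S is an isthmus (coloop) of M, where V = (S ∪ T) \ U. Then the restriction L|U is isomorphic to M; indeed, for any bijection f : V ∩ S → U ∩ T, the bijection φ₁ : U → S that is the identity on U ∩ S and equals f⁻¹ on U ∩ T is an isomorphism from L|U to M (a set B ⊆ S is a basis of M if and only if φ₁⁻¹(B) is a basis of L|U). -/
open Set Matroid

/-- A loop of a matroid `N` is an element contained in no independent set of `N`. -/
def IsLoopOf {α : Type*} (N : Matroid α) (e : α) : Prop := ∀ I, N.Indep I → e ∉ I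

/-- An isthmus (coloop) of a matroid `M` is an element contained in every basis of `M`. -/
def IsIsthmusOf {α : Type*} (M : Matroid α) (e : α) : Prop := ∀ B, M.IsBase B → e ∈ B

/-- Two matroids are isomorphic if there is a bijection between their ground sets
carrying independent sets to independent sets in both directions. -/
def MatroidIso {α β : Type*} (M : Matroid α) (N : Matroid β) : Prop :=
  ∃ e : M.E ≃ N.E, ∀ I : Set M.E,
    M.Indep ((↑) '' I) ↔ N.Indep ((↑) '' (e '' I))

/-!
Since `|U| = |S|`, the isthmi `S \ U` of `M` are as many as the elements of `U ∩ T`.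
On `U` the nullity condition of the free product is automatic: for `A ⊆ U` we have
`|A ∩ T| ≤ |S \ U|`, and `(A ∩ S) ∪ (S \ U)` is independent, so the rank-lack of `A ∩ S`
is at least `|S \ U|`. Hence the independent sets of `L|U` are the `A ⊆ U` with `A ∩ S`
independent in `M`. As adjoining isthmi preserves independence, `L|U` is the image of `M`
under the map that is the identity on `S ∩ U` and any bijection `S \ U → U ∩ T` on the
rest; this map is `φ₁⁻¹`.
-/

section Iso

variable {α β : Type*}

lemma IsIsthmusOf.isColoop {M : Matroid α} {e : α} (he : IsIsthmusOf M e) : M.IsColoop e :=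
  isColoop_iff_forall_mem_isBase.2 fun B hB => he B hB

lemma MatroidIso.symm {M : Matroid α} {N : Matroid β} (h : MatroidIso M N) : MatroidIso N M := by
  obtain ⟨e, he⟩ := h
  refine ⟨e.symm, fun I => ?_⟩
  rw [he, Equiv.image_symm_image]

lemma matroidIso_map (M : Matroid α) (f : α → β) (hf : InjOn f M.E) :
    MatroidIso M (M.map f hf) := by
  refine ⟨hf.bijOn_image.equiv f, fun I => ?_⟩
  rw [← map_image_indep_iff (hf := hf) (image_subset_iff.2 fun x _ => x.2), image_image,
    image_image]
  rfl

end Iso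

section Rank

variable {α : Type*} {M : Matroid α} {I K X : Set α}

lemma ncard_le_mrk (hE : M.E.Finite) (hI : M.Indep I) (hIX : I ⊆ X) : I.ncard ≤ mrk M X := by
  refine le_csSup ⟨M.E.ncard, ?_⟩ ⟨I, ⟨hI, hIX⟩, rfl⟩
  rintro n ⟨J, ⟨hJ, -⟩, rfl⟩
  exact ncard_le_ncard hJ.subset_ground hE

lemma mrk_le_ncard (hX : X.Finite) : mrk M X ≤ X.ncard := by
  refine csSup_le ⟨0, ∅, ⟨M.empty_indep, empty_subset _⟩, by simp⟩ ?_
  rintro n ⟨J, ⟨-, hJX⟩, rfl⟩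
  exact ncard_le_ncard hJX hX

lemma ncard_add_ncard_le_mrk_ground (hE : M.E.Finite) (hI : M.Indep I) (hK : K ⊆ M.coloops)
    (hIK : Disjoint I K) : I.ncard + K.ncard ≤ mrk M M.E := by
  have hKE : K ⊆ M.E := hK.trans M.coloops_subset_ground
  rw [← ncard_union_eq hIK (hE.subset hI.subset_ground) (hE.subset hKE)]
  exact ncard_le_mrk hE ((union_indep_iff_indep_of_subset_coloops hK).2 hI)
    (union_subset hI.subset_ground hKE)

end Rank

lemma exists_bijOn_sdiff_of_ncard_eq {α : Type*} {s t : Set α} (hs : s.Finite) (ht : t.Finite)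
    (h : s.ncard = t.ncard) : ∃ f : α → α, BijOn f (s \ t) (t \ s) := by
  rcases isEmpty_or_nonempty α with hα | hα
  · exact ⟨id, by simp [eq_empty_of_isEmpty]⟩
  refine hs.sdiff.exists_bijOn_of_encard_eq ?_
  rw [← encard_eq_encard_iff_encard_sdiff_eq_encard_sdiff (hs.inter_of_left t),
    ← hs.cast_ncard_eq, ← ht.cast_ncard_eq, h]

section Piecewise

variable {α : Type*} {S U : Set α} {f : α → α} [DecidablePred (· ∈ U)]

lemma image_piecewise_id (B : Set α) : U.piecewise id f '' B = (B ∩ U) ∪ f '' (B \ U) := by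
  rw [← inter_union_sdiff B U, image_union, inter_union_sdiff,
    image_congr fun x hx => piecewise_eq_of_mem U id f hx.2,
    image_congr fun x hx => piecewise_eq_of_notMem U id f hx.2, image_id]

lemma bijOn_piecewise_id (hf : BijOn f (S \ U) (U \ S)) : BijOn (U.piecewise id f) S U := by
  have hid : BijOn (U.piecewise id f) (S ∩ U) (S ∩ U) :=
    (bijOn_id _).congr fun x hx => (piecewise_eq_of_mem U id f hx.2).symm
  have hf' : BijOn (U.piecewise id f) (S \ U) (U \ S) :=
    hf.congr fun x hx => (piecewise_eq_of_notMem U id f hx.2).symm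
  have hinj : InjOn (U.piecewise id f) ((S ∩ U) ∪ (S \ U)) := by
    refine (injOn_union disjoint_inf_sdiff).2 ⟨hid.injOn, hf'.injOn, ?_⟩
    rintro x hx y hy hxy
    rw [piecewise_eq_of_mem U id f hx.2] at hxy
    exact (hf'.mapsTo hy).2 (hxy ▸ hx.1)
  have h := hid.union hf' hinj
  rwa [inter_union_sdiff, inter_comm, inter_union_sdiff] at h

end Piecewise

section FreeProduct

variable {α : Type*} {M N L : Matroid α} {S T U : Set α}

lemma restrict_indep_iff_indep_inter (hS : S.Finite) (hMS : M.E = S) (hST : Disjoint S T)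
    (hLI : ∀ A : Set α, L.Indep A ↔ A ⊆ S ∪ T ∧ M.Indep (A ∩ S) ∧
      (A ∩ T).ncard - mrk N (A ∩ T) ≤ mrk M S - mrk M (A ∩ S))
    (hU : U ⊆ S ∪ T) (hK : S \ U ⊆ M.coloops) (hUS : (U \ S).Finite)
    (hcard : (U \ S).ncard ≤ (S \ U).ncard) {A : Set α} (hA : A ⊆ U) :
    (L ↾ U).Indep A ↔ M.Indep (A ∩ S) := by
  rw [restrict_indep_iff, hLI]
  refine ⟨fun h => h.1.2.1, fun h => ⟨⟨hA.trans hU, h, ?_⟩, hA⟩⟩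
  have hAT : (A ∩ T).ncard ≤ (S \ U).ncard :=
    (ncard_le_ncard (fun _ hx => mem_sdiff_of_mem (hA hx.1) (hST.notMem_of_mem_right hx.2))
      hUS).trans hcard
  have hrank := ncard_add_ncard_le_mrk_ground (hMS ▸ hS) h hK
    (disjoint_sdiff_right.mono_left (inter_subset_left.trans hA))
  have hAS := mrk_le_ncard (M := M) (hS.subset (inter_subset_right (s := A)))
  rw [hMS] at hrank
  omega

variable [DecidablePred (· ∈ U)]

lemma restrict_eq_map (hS : S.Finite) (hMS : M.E = S) (hST : Disjoint S T)
    (hLI : ∀ A : Set α, L.Indep A ↔ A ⊆ S ∪ T ∧ M.Indep (A ∩ S) ∧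
      (A ∩ T).ncard - mrk N (A ∩ T) ≤ mrk M S - mrk M (A ∩ S))
    (hU : U ⊆ S ∪ T) (hK : S \ U ⊆ M.coloops) {f : α → α} (hf : BijOn f (S \ U) (U \ S)) :
    L ↾ U = M.map (U.piecewise id f) (hMS ▸ (bijOn_piecewise_id hf).injOn) := by
  have hbij := bijOn_piecewise_id hf
  have hUS : (U \ S).Finite := hf.image_eq ▸ hS.sdiff.image f
  refine ext_indep (by rw [restrict_ground_eq, map_ground, hMS, hbij.image_eq]) fun I hI => ?_
  rw [restrict_indep_iff_indep_inter hS hMS hST hLI hU hK hUS hf.ncard_eq.symm.le hI,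
    map_indep_iff]
  constructor
  · intro h
    refine ⟨S ∩ U.piecewise id f ⁻¹' I, ?_, ?_⟩
    · refine ((union_indep_iff_indep_of_subset_coloops hK).2 h).subset ?_
      rintro x ⟨hxS, hxI⟩
      by_cases hxU : x ∈ U
      · rw [mem_preimage, piecewise_eq_of_mem U id f hxU] at hxI
        exact Or.inl ⟨hxI, hxS⟩
      · exact Or.inr ⟨hxS, hxU⟩
    · rw [image_inter_preimage, hbij.image_eq, eq_comm, inter_eq_right]
      exact hI
  · rintro ⟨I₀, hI₀, rfl⟩
    refine hI₀.subset ?_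
    rintro _ ⟨⟨x, hx, rfl⟩, hxS⟩
    by_cases hxU : x ∈ U
    · rwa [piecewise_eq_of_mem U id f hxU]
    · rw [piecewise_eq_of_notMem U id f hxU] at hxS
      exact absurd hxS (hf.mapsTo ⟨hMS ▸ hI₀.subset_ground hx, hxU⟩).2

end FreeProduct

theorem stmt_10_general {α : Type*} (M N : Matroid α) (S T : Set α)
    (hS : S.Finite) (hT : T.Finite) (hMS : M.E = S)
    (hST : Disjoint S T)
    (L : Matroid α)
    (hLI : ∀ A : Set α, L.Indep A ↔ A ⊆ S ∪ T ∧ M.Indep (A ∩ S) ∧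
      (A ∩ T).ncard - mrk N (A ∩ T) ≤ mrk M S - mrk M (A ∩ S))
    (U : Set α) (hU : U ⊆ S ∪ T) (hUcard : U.ncard = S.ncard)
    (hVS : ∀ e ∈ ((S ∪ T) \ U) ∩ S, IsIsthmusOf M e) :
    MatroidIso (L ↾ U) M ∧
      ∀ f : α → α, Set.BijOn f (((S ∪ T) \ U) ∩ S) (U ∩ T) →
        ∀ B ⊆ S, (M.IsBase B ↔ (L ↾ U).IsBase ((B ∩ U) ∪ f '' (B \ U))) := by
  classical
  have hVS_eq : ((S ∪ T) \ U) ∩ S = S \ U := by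
    rw [inter_comm, inter_sdiff_distrib_left, inter_eq_left.2 subset_union_left, sdiff_self_inter]
  have hUT : U ∩ T = U \ S :=
    subset_antisymm (fun x hx => ⟨hx.1, hST.notMem_of_mem_right hx.2⟩)
      (fun x hx => ⟨hx.1, (hU hx.1).resolve_left hx.2⟩)
  have hK : S \ U ⊆ M.coloops := fun e he => (hVS e (hVS_eq ▸ he)).isColoop
  obtain ⟨g, hg⟩ := exists_bijOn_sdiff_of_ncard_eq hS ((hS.union hT).subset hU) hUcard.symm
  refine ⟨?_, fun f hf B hB => ?_⟩
  · rw [restrict_eq_map hS hMS hST hLI hU hK hg]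
    exact (matroidIso_map _ _ _).symm
  · rw [hVS_eq, hUT] at hf
    rw [restrict_eq_map hS hMS hST hLI hU hK hf, ← image_piecewise_id,
      map_image_isBase_iff (hMS ▸ hB)]

/-- Let `L = M □ N`, `U ⊆ S ∪ T` with `|U| = |S|`, and suppose every element of
`V ∩ S` is an isthmus of `M`, where `V = (S ∪ T) \ U`.  Then `L|U ≅ M`; indeed for any
bijection `f : V ∩ S → U ∩ T`, the bijection `φ₁ : U → S` which is the identity on
`U ∩ S` and `f⁻¹` on `U ∩ T` is an isomorphism from `L|U` onto `M`: a set `B ⊆ S` is a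
basis of `M` iff `φ₁⁻¹(B) = (B ∩ U) ∪ f '' (B \ U)` is a basis of `L|U`. -/
theorem stmt_10 {α : Type*} (M N : Matroid α) (S T : Set α)
    (hS : S.Finite) (hT : T.Finite) (hMS : M.E = S) (hNT : N.E = T)
    (hST : Disjoint S T)
    (L : Matroid α) (hLE : L.E = S ∪ T)
    (hLI : ∀ A : Set α, L.Indep A ↔ A ⊆ S ∪ T ∧ M.Indep (A ∩ S) ∧
      (A ∩ T).ncard - mrk N (A ∩ T) ≤ mrk M S - mrk M (A ∩ S))
    (U : Set α) (hU : U ⊆ S ∪ T) (hUcard : U.ncard = S.ncard)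
    (hVS : ∀ e ∈ ((S ∪ T) \ U) ∩ S, IsIsthmusOf M e) :
    MatroidIso (L ↾ U) M ∧
      ∀ f : α → α, Set.BijOn f (((S ∪ T) \ U) ∩ S) (U ∩ T) →
        ∀ B ⊆ S, (M.IsBase B ↔ (L ↾ U).IsBase ((B ∩ U) ∪ f '' (B \ U))) :=
  stmt_10_general M N S T hS hT hMS hST L hLI U hU hUcard hVS
end

section
/- For n, m ≥ 0, the map sending a pair of isomorphism classes ([M], [N]), where M is a matroid on an n-element set and N is a matroid on an m-element set, to the isomorphism class [M □ N] of their free product (formed after making the ground sets disjoint) is injective from the product of the sets of isomorphism classes of matroids on n and m elements into the set of isomorphism classes of matroids on n + m elements. -/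
open Set Matroid

/-!
In `M □ N` every element of the second factor is at least as free as every element of the
first: replacing an element of the first factor in an independent set by one of the second
keeps it independent. Given an isomorphism
`g : M □ N ≅ P □ Q`, take `x` in the first factor of `P □ Q` whose preimage lies in the second
factor of `M □ N`, and `y` the other way round. Then `x` and `y` are each at least as free as
the other in `P □ Q`, so the transposition `(x y)` is an automorphism of `P □ Q`; composing `g`
with such transpositions yields an isomorphism that maps the first factor onto the first factor.
It restricts to `M ≅ P` on the first factors and, after contracting a basis of the first factor,
to `N ≅ Q` on the second.
-/

lemma image_swap_eq_self_of_mem_iff {α : Type*} [DecidableEq α] {x y : α} {A : Set α}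
    (h : x ∈ A ↔ y ∈ A) : Equiv.swap x y '' A = A := by
  ext z
  rw [Equiv.image_eq_preimage_symm, Equiv.symm_swap, mem_preimage, Equiv.swap_apply_def]
  split_ifs with hzx hzy <;> simp_all

lemma exists_equiv_image_image_eq {α γ : Type*} {f : γ → α} (hf : Function.Injective f)
    (h : α ≃ α) (hh : h '' range f = range f) :
    ∃ σ : γ ≃ γ, ∀ I, h '' (f '' I) = f '' (σ '' I) := by
  let e := Equiv.ofInjective f hf
  refine ⟨(e.trans ((h.image (range f)).trans (Equiv.setCongr hh))).trans e.symm, fun I => ?_⟩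
  simp only [image_image]
  congr! with x
  simp [e, Equiv.apply_ofInjective_symm]

lemma matroidIso_iff_of_ground_eq_univ {α β : Type*} {M : Matroid α} {N : Matroid β}
    (hM : M.E = univ) (hN : N.E = univ) :
    MatroidIso M N ↔ ∃ e : α ≃ β, ∀ I, M.Indep I ↔ N.Indep (e '' I) := by
  let eM : M.E ≃ α := Equiv.subtypeUnivEquiv fun a => hM ▸ mem_univ a
  let eN : N.E ≃ β := Equiv.subtypeUnivEquiv fun b => hN ▸ mem_univ b
  constructor
  · rintro ⟨e, he⟩
    refine ⟨eM.symm.trans (e.trans eN), fun I => ?_⟩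
    convert he (eM.symm '' I) using 2
    · exact (eM.image_symm_image I).symm
    · simp only [image_image, Equiv.coe_trans]
      rfl
  · rintro ⟨e, he⟩
    refine ⟨eM.trans (e.trans eN.symm), fun I => ?_⟩
    rw [he]
    simp only [image_image, Equiv.coe_trans]
    rfl

section mrk

variable {α β : Type*} {L M : Matroid α} {X Y I : Set α}

lemma mrk_congr (h : ∀ I ⊆ X, L.Indep I ↔ M.Indep I) : mrk L X = mrk M X := by
  unfold mrk
  congr 2
  ext I
  exact and_congr_left fun hIX => h I hIX

lemma mrk_image_equiv {L' : Matroid β} (g : α ≃ β) (hg : ∀ A, L.Indep A ↔ L'.Indep (g '' A))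
    (X : Set α) : mrk L' (g '' X) = mrk L X := by
  unfold mrk
  congr 1
  ext k
  constructor
  · rintro ⟨J, ⟨hJ, hJX⟩, rfl⟩
    refine ⟨g.symm '' J, ⟨?_, ?_⟩, ncard_image_of_injective _ g.symm.injective⟩
    · rwa [hg, Equiv.image_symm_image]
    · exact (Equiv.symm_image_subset g X J).2 hJX
  · rintro ⟨I, ⟨hI, hIX⟩, rfl⟩
    exact ⟨g '' I, ⟨(hg I).1 hI, image_mono hIX⟩, ncard_image_of_injective _ g.injective⟩

variable [Finite α]

lemma mrk_le_of_indep (hI : M.Indep I) (hIX : I ⊆ X) : I.ncard ≤ mrk M X :=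
  le_csSup (toFinite _).bddAbove ⟨I, ⟨hI, hIX⟩, rfl⟩

lemma exists_indep_subset_ncard_eq_mrk (M : Matroid α) (X : Set α) :
    ∃ I, M.Indep I ∧ I ⊆ X ∧ I.ncard = mrk M X := by
  have hne : (ncard '' {I | M.Indep I ∧ I ⊆ X}).Nonempty :=
    ⟨0, ∅, ⟨M.empty_indep, empty_subset _⟩, ncard_empty _⟩
  obtain ⟨I, ⟨hI, hIX⟩, hcard⟩ := hne.csSup_mem (toFinite _)
  exact ⟨I, hI, hIX, hcard⟩

lemma mrk_mono (M : Matroid α) (hXY : X ⊆ Y) : mrk M X ≤ mrk M Y := by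
  obtain ⟨I, hI, hIX, hcard⟩ := exists_indep_subset_ncard_eq_mrk M X
  exact hcard ▸ mrk_le_of_indep hI (hIX.trans hXY)

lemma Matroid.Indep.mrk_eq (hI : M.Indep I) : mrk M I = I.ncard := by
  refine le_antisymm ?_ (mrk_le_of_indep hI Subset.rfl)
  obtain ⟨J, -, hJI, hcard⟩ := exists_indep_subset_ncard_eq_mrk M I
  exact hcard ▸ ncard_le_ncard hJI

lemma indep_iff_ncard_le_mrk : M.Indep X ↔ X.ncard ≤ mrk M X := by
  refine ⟨fun h => h.mrk_eq.ge, fun h => ?_⟩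
  obtain ⟨J, hJ, hJX, hcard⟩ := exists_indep_subset_ncard_eq_mrk M X
  rwa [eq_of_subset_of_ncard_le hJX (hcard ▸ h)] at hJ

end mrk

namespace Matroid

variable {α : Type*} {L L' M N P Q : Matroid α} {S A B I : Set α} {x y : α}

def Freer (L : Matroid α) (x y : α) : Prop :=
  ∀ A, x ∉ A → y ∉ A → L.Indep (insert x A) → L.Indep (insert y A)

lemma Freer.image_equiv {β : Type*} {L' : Matroid β} (g : α ≃ β)
    (hg : ∀ A, L.Indep A ↔ L'.Indep (g '' A)) (h : L.Freer x y) : L'.Freer (g x) (g y) := by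
  intro A hxA hyA hA
  have key := h (g.symm '' A) (by simpa using hxA) (by simpa using hyA)
  rw [hg, hg, image_insert_eq, image_insert_eq, Equiv.image_symm_image] at key
  exact key hA

lemma Freer.indep_image_swap [DecidableEq α] (hxy : L.Freer x y) (hyx : L.Freer y x)
    (hA : L.Indep A) : L.Indep (Equiv.swap x y '' A) := by
  by_cases hxA : x ∈ A <;> by_cases hyA : y ∈ A
  · rwa [image_swap_eq_self_of_mem_iff (iff_of_true hxA hyA)]
  · rw [Equiv.image_swap_of_mem_of_notMem hxA hyA,
      ← insert_sdiff_singleton_comm (ne_of_mem_of_not_mem hxA hyA).symm]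
    refine hxy _ (by simp) (by simp [hyA]) ?_
    rwa [insert_sdiff_singleton, insert_eq_of_mem hxA]
  · rw [Equiv.swap_comm, Equiv.image_swap_of_mem_of_notMem hyA hxA,
      ← insert_sdiff_singleton_comm (ne_of_mem_of_not_mem hyA hxA).symm]
    refine hyx _ (by simp) (by simp [hxA]) ?_
    rwa [insert_sdiff_singleton, insert_eq_of_mem hyA]
  · rwa [image_swap_eq_self_of_mem_iff (iff_of_false hxA hyA)]

/-- `L = M □ N` for `M` on `S` and `N` on `Sᶜ`: the condition reads `ν_N(A ∩ Sᶜ) ≤ λ_M(A ∩ S)`,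
and neither truncated subtraction ever truncates. -/
def IsFreeProduct (L M N : Matroid α) (S : Set α) : Prop :=
  ∀ A, L.Indep A ↔ M.Indep (A ∩ S) ∧ (A ∩ Sᶜ).ncard - mrk N (A ∩ Sᶜ) ≤ mrk M S - mrk M (A ∩ S)

lemma IsFreeProduct.indep_iff_of_subset (h : L.IsFreeProduct M N S) (hA : A ⊆ S) :
    L.Indep A ↔ M.Indep A := by
  rw [h, inter_eq_left.2 hA, ← sdiff_eq, sdiff_eq_empty.2 hA]
  simp

variable [Finite α]

lemma IsFreeProduct.freer (h : L.IsFreeProduct M N S) (hx : x ∈ S) (hy : y ∉ S) :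
    L.Freer x y := by
  intro A hxA hyA hA
  rw [h, insert_inter_of_mem hx, insert_inter_of_notMem (notMem_compl_iff.2 hx)] at hA
  rw [h, insert_inter_of_notMem hy, insert_inter_of_mem (mem_compl hy)]
  obtain ⟨hMx, hnull⟩ := hA
  have hxAS : x ∉ A ∩ S := fun hx' => hxA hx'.1
  have hyAS : y ∉ A ∩ Sᶜ := fun hy' => hyA hy'.1
  have hMA : M.Indep (A ∩ S) := hMx.subset (subset_insert _ _)
  have hrkS : (A ∩ S).ncard + 1 ≤ mrk M S := by
    rw [← ncard_insert_of_notMem hxAS]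
    exact mrk_le_of_indep hMx (insert_subset hx inter_subset_right)
  have hrkN := mrk_mono N (subset_insert y (A ∩ Sᶜ))
  rw [hMx.mrk_eq, ncard_insert_of_notMem hxAS] at hnull
  refine ⟨hMA, ?_⟩
  rw [hMA.mrk_eq, ncard_insert_of_notMem hyAS]
  omega

lemma IsFreeProduct.indep_union_iff (h : L.IsFreeProduct M N S) (hI : L.Indep I) (hIS : I ⊆ S)
    (hImax : mrk L S ≤ I.ncard) (hB : B ⊆ Sᶜ) : L.Indep (I ∪ B) ↔ N.Indep B := by
  have hMI : M.Indep I := (h.indep_iff_of_subset hIS).1 hI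
  have hrk : mrk M S = I.ncard :=
    le_antisymm ((mrk_congr fun J hJ => h.indep_iff_of_subset hJ) ▸ hImax)
      (mrk_le_of_indep hMI hIS)
  have hIBS : (I ∪ B) ∩ S = I := by
    rw [union_inter_distrib_right, inter_eq_left.2 hIS,
      (subset_compl_iff_disjoint_right.1 hB).inter_eq, union_empty]
  have hIBT : (I ∪ B) ∩ Sᶜ = B := by
    rw [union_inter_distrib_right, inter_eq_left.2 hB, ← sdiff_eq, sdiff_eq_empty.2 hIS,
      empty_union]
  rw [h, hIBS, hIBT, hMI.mrk_eq, hrk, indep_iff_ncard_le_mrk (M := N), Nat.sub_self,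
    Nat.le_zero, Nat.sub_eq_zero_iff_le]
  exact and_iff_right hMI

lemma exists_equiv_image_eq_of_freer (hL : ∀ x ∈ S, ∀ y ∉ S, L.Freer x y)
    (hL' : ∀ x ∈ S, ∀ y ∉ S, L'.Freer x y) (g : α ≃ α)
    (hg : ∀ A, L.Indep A ↔ L'.Indep (g '' A)) :
    ∃ h : α ≃ α, (∀ A, L.Indep A ↔ L'.Indep (h '' A)) ∧ h '' S = S := by
  classical
  induction hk : (S \ g '' S).ncard using Nat.strong_induction_on generalizing g with
  | _ k ih =>
  by_cases hgS : g '' S = S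
  · exact ⟨g, hg, hgS⟩
  have hcard : (g '' S).ncard = S.ncard := ncard_image_of_injective S g.injective
  obtain ⟨x, hxS, hxg⟩ : (S \ g '' S).Nonempty :=
    sdiff_nonempty.2 fun hsub => hgS (eq_of_subset_of_ncard_le hsub hcard.le).symm
  obtain ⟨y, hyg, hyS⟩ : (g '' S \ S).Nonempty :=
    sdiff_nonempty.2 fun hsub => hgS (eq_of_subset_of_ncard_le hsub hcard.ge)
  -- `x` and `y` are clones in `L'`: `g⁻¹ x ∉ S` and `g⁻¹ y ∈ S`, so `L` sees the reverse order.
  have hyx : L'.Freer y x := by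
    simpa using
      (hL (g.symm y) (by simpa using hyg) (g.symm x) (by simpa using hxg)).image_equiv g hg
  have hswap : ∀ B, L'.Indep (Equiv.swap x y '' B) ↔ L'.Indep B := fun B =>
    ⟨fun hB => by simpa [image_image] using (hL' x hxS y hyS).indep_image_swap hyx hB,
      (hL' x hxS y hyS).indep_image_swap hyx⟩
  have himage : ∀ A, (g.trans (Equiv.swap x y)) '' A = Equiv.swap x y '' (g '' A) := fun A =>
    by rw [Equiv.coe_trans, image_comp]
  refine ih _ ?_ (g.trans (Equiv.swap x y)) (fun A => by rw [himage, hswap]; exact hg A) rfl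
  rw [← hk, himage, Equiv.swap_comm, Equiv.image_swap_of_mem_of_notMem hyg hxg]
  calc (S \ (insert x (g '' S) \ {y})).ncard = ((S \ g '' S) \ {x}).ncard := by
        congr 1; ext z; simp only [mem_sdiff, mem_insert_iff, mem_singleton_iff]; grind
    _ < (S \ g '' S).ncard := ncard_sdiff_singleton_lt_of_mem ⟨hxS, hxg⟩

lemma IsFreeProduct.exists_equiv_indep_iff (h1 : L.IsFreeProduct M N S)
    (h2 : L'.IsFreeProduct P Q S) (g : α ≃ α) (hg : ∀ A, L.Indep A ↔ L'.Indep (g '' A)) :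
    ∃ h : α ≃ α, h '' S = S ∧ (∀ A ⊆ S, M.Indep A ↔ P.Indep (h '' A)) ∧
      ∀ B ⊆ Sᶜ, N.Indep B ↔ Q.Indep (h '' B) := by
  obtain ⟨h, hh, hS⟩ := exists_equiv_image_eq_of_freer (fun x hx y hy => h1.freer hx hy)
    (fun x hx y hy => h2.freer hx hy) g hg
  refine ⟨h, hS, fun A hA => ?_, fun B hB => ?_⟩
  · rw [← h1.indep_iff_of_subset hA, hh, h2.indep_iff_of_subset (hS ▸ image_mono hA)]
  obtain ⟨I, hI, hIS, hIcard⟩ := exists_indep_subset_ncard_eq_mrk L S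
  have hhI : mrk L' S ≤ (h '' I).ncard := by
    rw [ncard_image_of_injective I h.injective, hIcard, ← mrk_image_equiv h hh, hS]
  have hSc : h '' Sᶜ = Sᶜ := by rw [image_compl_eq h.bijective, hS]
  rw [← h1.indep_union_iff hI hIS hIcard.ge hB, hh, image_union,
    h2.indep_union_iff ((hh I).1 hI) (hS ▸ image_mono hIS) hhI (hSc ▸ image_mono hB)]

end Matroid

/-- Injectivity of the free-product map on isomorphism classes: for matroids `M`, `P` on an
`n`-element set and `N`, `Q` on an `m`-element set, if the free products `M □ N` and
`P □ Q` (formed after making the ground sets disjoint, via the inclusions into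
`Fin n ⊕ Fin m`) are isomorphic, then `[M] = [P]` and `[N] = [Q]`; that is, the map
`([M], [N]) ↦ [M □ N]` is injective. -/
theorem stmt_15 (n m : ℕ)
    (M P : Matroid (Fin n)) (N Q : Matroid (Fin m))
    (hM : M.E = Set.univ) (hN : N.E = Set.univ)
    (hP : P.E = Set.univ) (hQ : Q.E = Set.univ)
    (L L' : Matroid (Fin n ⊕ Fin m))
    -- `L` is the free product `M □ N` of the disjoint copies of `M` and `N`:
    (hLE : L.E = Set.range Sum.inl ∪ Set.range Sum.inr)
    (hLI : ∀ A : Set (Fin n ⊕ Fin m), L.Indep A ↔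
      A ⊆ Set.range Sum.inl ∪ Set.range Sum.inr ∧
      (M.mapEmbedding (.inl : Fin n ↪ Fin n ⊕ Fin m)).Indep (A ∩ Set.range Sum.inl) ∧
      (A ∩ Set.range Sum.inr).ncard
          - mrk (N.mapEmbedding (.inr : Fin m ↪ Fin n ⊕ Fin m)) (A ∩ Set.range Sum.inr) ≤
        mrk (M.mapEmbedding (.inl : Fin n ↪ Fin n ⊕ Fin m)) (Set.range Sum.inl)
          - mrk (M.mapEmbedding (.inl : Fin n ↪ Fin n ⊕ Fin m)) (A ∩ Set.range Sum.inl))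
    -- `L'` is the free product `P □ Q` of the disjoint copies of `P` and `Q`:
    (hL'E : L'.E = Set.range Sum.inl ∪ Set.range Sum.inr)
    (hL'I : ∀ A : Set (Fin n ⊕ Fin m), L'.Indep A ↔
      A ⊆ Set.range Sum.inl ∪ Set.range Sum.inr ∧
      (P.mapEmbedding (.inl : Fin n ↪ Fin n ⊕ Fin m)).Indep (A ∩ Set.range Sum.inl) ∧
      (A ∩ Set.range Sum.inr).ncard
          - mrk (Q.mapEmbedding (.inr : Fin m ↪ Fin n ⊕ Fin m)) (A ∩ Set.range Sum.inr) ≤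
        mrk (P.mapEmbedding (.inl : Fin n ↪ Fin n ⊕ Fin m)) (Set.range Sum.inl)
          - mrk (P.mapEmbedding (.inl : Fin n ↪ Fin n ⊕ Fin m)) (A ∩ Set.range Sum.inl))
    (hiso : MatroidIso L L') :
    MatroidIso M P ∧ MatroidIso N Q := by
  have h1 : L.IsFreeProduct (M.mapEmbedding .inl) (N.mapEmbedding .inr) (range Sum.inl) :=
    fun A => by rw [hLI, ← compl_range_inl, union_compl_self, and_iff_right (subset_univ A)]
  have h2 : L'.IsFreeProduct (P.mapEmbedding .inl) (Q.mapEmbedding .inr) (range Sum.inl) :=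
    fun A => by rw [hL'I, ← compl_range_inl, union_compl_self, and_iff_right (subset_univ A)]
  obtain ⟨g, hg⟩ := (matroidIso_iff_of_ground_eq_univ (hLE.trans range_inl_union_range_inr)
    (hL'E.trans range_inl_union_range_inr)).1 hiso
  obtain ⟨h, hS, hleft, hright⟩ := h1.exists_equiv_indep_iff h2 g hg
  obtain ⟨σ, hσ⟩ := exists_equiv_image_image_eq Sum.inl_injective h hS
  obtain ⟨ρ, hρ⟩ := exists_equiv_image_image_eq Sum.inr_injective h
    (by rw [← compl_range_inl, image_compl_eq h.bijective, hS])
  refine ⟨(matroidIso_iff_of_ground_eq_univ hM hP).2 ⟨σ, fun I => ?_⟩,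
    (matroidIso_iff_of_ground_eq_univ hN hQ).2 ⟨ρ, fun B => ?_⟩⟩
  · calc M.Indep I ↔ (M.mapEmbedding .inl).Indep (Sum.inl '' I) :=
          (map_image_indep_iff (hM ▸ subset_univ I)).symm
      _ ↔ (P.mapEmbedding .inl).Indep (Sum.inl '' (σ '' I)) := by
          rw [← hσ]; exact hleft _ (image_subset_range _ _)
      _ ↔ P.Indep (σ '' I) := map_image_indep_iff (hP ▸ subset_univ _)
  · calc N.Indep B ↔ (N.mapEmbedding .inr).Indep (Sum.inr '' B) :=
          (map_image_indep_iff (hN ▸ subset_univ B)).symm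
      _ ↔ (Q.mapEmbedding .inr).Indep (Sum.inr '' (ρ '' B)) := by
          rw [← hρ]; exact hright _ (compl_range_inl ▸ image_subset_range _ _)
      _ ↔ Q.Indep (ρ '' B) := map_image_indep_iff (hQ ▸ subset_univ _)
end
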